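/- Let G be a finite simple graph with a leaf z_0, and let y_0 be the unique neighbor of z_0. Then I_3(G) = z_0·y_0·(x : x ∈ N(y_0) \ {z_0}) + I_3(G_1), where G_1 = G \ {z_0} is the induced subgraph of G on V(G) \ {z_0}. -/

import Mathlib

/-! A 3-path through the leaf `z₀` cannot have `z₀` in the middle (both its neighbours would be
`y₀`), so it is `z₀, y₀, x` up to reversal with `x ∈ N(y₀) \ {z₀}`; every other 3-path of `G` is
a 3-path of `G \ {z₀}`. -/

noncomputable section

namespace PathIdeals

open MvPolynomial

variable {k : Type*} [Field k] {V : Type*} [Fintype V] [LinearOrder V]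

/-- Transport a graded piece along an equality of degrees. -/
def castLinear (k : Type*) [Field k] (N : ℕ → Type*) [∀ a, AddCommGroup (N a)]
    [∀ a, Module k (N a)] {a b : ℕ} (h : a = b) : N a →ₗ[k] N b := by
  subst h; exact LinearMap.id

/-- The Koszul-type differential computing `Tor^S(k, N)` for a graded module `N` over
`S = k[x_v : v ∈ V]` given by its graded pieces `N a` together with the multiplication maps
`x_v ⬝ : N a → N (a+1)`.  The map goes from homological degree `i`, internal degree `j`
(so coefficients in `N (j - i)`) to homological degree `i - 1`. -/
def koszulMap (k : Type*) [Field k] {V : Type*} [Fintype V] [LinearOrder V]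
    (N : ℕ → Type*) [∀ a, AddCommGroup (N a)] [∀ a, Module k (N a)]
    (mul : V → ∀ a : ℕ, N a →ₗ[k] N (a + 1)) (i j : ℕ) :
    ({s : Finset V // s.card = i} →₀ N (j - i)) →ₗ[k]
      ({s : Finset V // s.card = i - 1} →₀ N (j - (i - 1))) :=
  if h : 1 ≤ i ∧ i ≤ j then
    Finsupp.lsum k fun s : {s : Finset V // s.card = i} =>
      ∑ v ∈ s.1.attach,
        ((-1 : k) ^ (s.1.filter (fun w => w < v.1)).card) •
          ((Finsupp.lsingle
              (⟨s.1.erase v.1, by rw [Finset.card_erase_of_mem v.2, s.2]⟩ :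
                {s : Finset V // s.card = i - 1})).comp
            ((castLinear k N (by omega : (j - i) + 1 = j - (i - 1))).comp (mul v.1 (j - i))))
  else 0

/-- The `(i,j)`-th graded Betti number `β_{i,j} = dim_k Tor_i^S(k, N)_j` of the graded module
`N`, computed as the dimension of the homology of the Koszul complex tensored with `N`.
(For modules generated in non-negative degrees, such as ideals and their quotient rings,
the Betti numbers vanish when `j < i`.) -/
def bettiAux (k : Type*) [Field k] {V : Type*} [Fintype V] [LinearOrder V]
    (N : ℕ → Type*) [∀ a, AddCommGroup (N a)] [∀ a, Module k (N a)]
    (mul : V → ∀ a : ℕ, N a →ₗ[k] N (a + 1)) (i j : ℕ) : ℕ :=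
  if j < i then 0
  else
    Module.finrank k
      (↥(LinearMap.ker (koszulMap k N mul i j)) ⧸
        Submodule.comap (LinearMap.ker (koszulMap k N mul i j)).subtype
          (LinearMap.range (koszulMap k N mul (i + 1) j)))

/-- The degree-`a` graded piece of a homogeneous ideal `I ⊆ S`, as a `k`-subspace. -/
def idealPiece (k : Type*) [Field k] {V : Type*} (I : Ideal (MvPolynomial V k)) (a : ℕ) :
    Submodule k (MvPolynomial V k) :=
  Submodule.restrictScalars k I ⊓ homogeneousSubmodule V k a

/-- Multiplication by the variable `x_v` on graded pieces of an ideal. -/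
def idealMul {k : Type*} [Field k] {V : Type*} (I : Ideal (MvPolynomial V k)) (v : V) (a : ℕ) :
    ↥(idealPiece k I a) →ₗ[k] ↥(idealPiece k I (a + 1)) where
  toFun f := ⟨X v * f.1, by
    obtain ⟨h1, h2⟩ := Submodule.mem_inf.mp f.2
    refine Submodule.mem_inf.mpr ⟨I.mul_mem_left _ h1, ?_⟩
    rw [mem_homogeneousSubmodule] at h2 ⊢
    simpa [add_comm] using (isHomogeneous_X k v).mul h2⟩
  map_add' f g := by ext; simp [mul_add]
  map_smul' c f := by ext; simp [mul_smul_comm]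

/-- The `(i,j)`-th graded Betti number `β_{i,j}(I) = dim_k Tor_i^S(k, I)_j` of a homogeneous
ideal `I` of the polynomial ring `S = k[x_v : v ∈ V]`. -/
def gradedBetti (k : Type*) [Field k] {V : Type*} [Fintype V] [LinearOrder V]
    (I : Ideal (MvPolynomial V k)) (i j : ℕ) : ℕ :=
  bettiAux k (fun a => ↥(idealPiece k I a)) (idealMul I) i j

/-- The projective dimension `pd(I) = sup { i | β_{i,j}(I) ≠ 0 for some j }` of a homogeneous
ideal of the polynomial ring. -/
def pdIdeal (k : Type*) [Field k] {V : Type*} [Fintype V] [LinearOrder V]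
    (I : Ideal (MvPolynomial V k)) : ℕ :=
  sSup {i | ∃ j, gradedBetti k I i j ≠ 0}

/-- The Castelnuovo–Mumford regularity `reg(I) = sup { j - i | β_{i,j}(I) ≠ 0 }` of a
homogeneous ideal of the polynomial ring. -/
def regIdeal (k : Type*) [Field k] {V : Type*} [Fintype V] [LinearOrder V]
    (I : Ideal (MvPolynomial V k)) : ℕ :=
  sSup {r | ∃ i, gradedBetti k I i (i + r) ≠ 0}

/-- Multiplication by `x_v` on the (constant) ungraded module underlying an ideal. -/
def idealMulTotal {k : Type*} [Field k] {V : Type*} (I : Ideal (MvPolynomial V k)) (v : V)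
    (_ : ℕ) : ↥(Submodule.restrictScalars k I) →ₗ[k] ↥(Submodule.restrictScalars k I) where
  toFun f := ⟨X v * f.1, I.mul_mem_left _ f.2⟩
  map_add' f g := by ext; simp [mul_add]
  map_smul' c f := by ext; simp [mul_smul_comm]

/-- The `i`-th total Betti number `β_i(I) = dim_k Tor_i^S(k, I)` of a homogeneous ideal of
the polynomial ring, computed as the dimension of ungraded Koszul homology. -/
def totalBetti (k : Type*) [Field k] {V : Type*} [Fintype V] [LinearOrder V]
    (I : Ideal (MvPolynomial V k)) (i : ℕ) : ℕ :=
  bettiAux k (fun _ => ↥(Submodule.restrictScalars k I)) (idealMulTotal I) i (i + 1)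

/-- `P = I + J` is a Betti splitting if `β_i(P) = β_i(I) + β_i(J) + β_{i-1}(I ∩ J)`
for all `i ≥ 0` (where `β_{-1} = 0`). -/
def IsBettiSplitting (k : Type*) [Field k] {V : Type*} [Fintype V] [LinearOrder V]
    (P I J : Ideal (MvPolynomial V k)) : Prop :=
  P = I + J ∧ totalBetti k P 0 = totalBetti k I 0 + totalBetti k J 0 ∧
    ∀ i : ℕ, totalBetti k P (i + 1) =
      totalBetti k I (i + 1) + totalBetti k J (i + 1) + totalBetti k (I ⊓ J) i

/-- The subspace of the degree-`a` homogeneous component of `S` consisting of elements of a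
homogeneous ideal `I`. -/
def quotSub (k : Type*) [Field k] {V : Type*} (I : Ideal (MvPolynomial V k)) (a : ℕ) :
    Submodule k ↥(homogeneousSubmodule V k a) :=
  Submodule.comap (homogeneousSubmodule V k a).subtype (Submodule.restrictScalars k I)

/-- The degree-`a` graded piece of the quotient ring `S/I`. -/
def quotPiece (k : Type*) [Field k] {V : Type*} (I : Ideal (MvPolynomial V k)) (a : ℕ) :
    Type _ :=
  ↥(homogeneousSubmodule V k a) ⧸ quotSub k I a

instance (I : Ideal (MvPolynomial V k)) (a : ℕ) : AddCommGroup (quotPiece k I a) :=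
  inferInstanceAs (AddCommGroup (↥(homogeneousSubmodule V k a) ⧸ quotSub k I a))

instance (I : Ideal (MvPolynomial V k)) (a : ℕ) : Module k (quotPiece k I a) :=
  inferInstanceAs (Module k (↥(homogeneousSubmodule V k a) ⧸ quotSub k I a))

/-- Multiplication by `x_v` on the homogeneous components of `S`. -/
def homogMul (k : Type*) [Field k] {V : Type*} (v : V) (a : ℕ) :
    ↥(homogeneousSubmodule V k a) →ₗ[k] ↥(homogeneousSubmodule V k (a + 1)) where
  toFun f := ⟨X v * f.1, by
    have h2 := (mem_homogeneousSubmodule _ _).mp f.2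
    rw [mem_homogeneousSubmodule]
    simpa [add_comm] using (isHomogeneous_X k v).mul h2⟩
  map_add' f g := by ext; simp [mul_add]
  map_smul' c f := by ext; simp [mul_smul_comm]

/-- Multiplication by `x_v` on graded pieces of the quotient ring `S/I`. -/
def quotMul {k : Type*} [Field k] {V : Type*} (I : Ideal (MvPolynomial V k)) (v : V) (a : ℕ) :
    quotPiece k I a →ₗ[k] quotPiece k I (a + 1) :=
  Submodule.mapQ (quotSub k I a) (quotSub k I (a + 1)) (homogMul k v a)
    (fun _ hx => I.mul_mem_left _ hx)

/-- The Castelnuovo–Mumford regularity `reg(S/I) = sup { j - i | β_{i,j}(S/I) ≠ 0 }` of the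
quotient of the polynomial ring by a homogeneous ideal. -/
def regQuot (k : Type*) [Field k] {V : Type*} [Fintype V] [LinearOrder V]
    (I : Ideal (MvPolynomial V k)) : ℕ :=
  sSup {r | ∃ i, bettiAux k (quotPiece k I) (quotMul I) i (i + r) ≠ 0}

/-! ### Graphs, path ideals and path induced matching numbers -/

/-- `l` is (the vertex list of) a `t`-path of `G`: `t` distinct vertices with consecutive
vertices adjacent. -/
def IsPathList {V : Type*} (G : SimpleGraph V) (t : ℕ) (l : List V) : Prop :=
  l.length = t ∧ l.Nodup ∧ l.Chain' G.Adj

/-- The `t`-path ideal `I_t(G)` of the graph `G`, generated by the monomials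
`x_{u_1} ⋯ x_{u_t}` over all `t`-paths `u_1, …, u_t` of `G`. -/
def pathIdeal (k : Type*) [Field k] {V : Type*} (G : SimpleGraph V) (t : ℕ) :
    Ideal (MvPolynomial V k) :=
  Ideal.span {f | ∃ l : List V, IsPathList G t l ∧ f = (l.map X).prod}

/-- A family of `t`-paths indexed by `Fin n` is a `t`-path induced matching of `G` if the
paths are pairwise vertex-disjoint and the only edges of `G` between vertices of the paths
are the edges of the paths. -/
def IsPathInducedMatching {V : Type*} (G : SimpleGraph V) (t : ℕ) {n : ℕ}
    (P : Fin n → List V) : Prop :=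
  (∀ a, IsPathList G t (P a)) ∧
    (∀ a b, a ≠ b → ∀ x, x ∈ P a → x ∉ P b) ∧
    (∀ x y : V, (∃ a, x ∈ P a) → (∃ b, y ∈ P b) → G.Adj x y →
      ∃ a, [x, y] <:+: P a ∨ [y, x] <:+: P a)

/-- The `t`-path induced matching number `ν_t(G)`: the largest size of a `t`-path induced
matching of `G`. -/
def pathNu {V : Type*} (G : SimpleGraph V) (t : ℕ) : ℕ :=
  sSup {n | ∃ P : Fin n → List V, IsPathInducedMatching G t P}

/-- The induced subgraph of `G` on a set `A` of vertices, viewed as a graph on the same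
vertex set (all vertices outside `A` become isolated). -/
def inducedOn {V : Type*} (G : SimpleGraph V) (A : Set V) : SimpleGraph V where
  Adj x y := G.Adj x y ∧ x ∈ A ∧ y ∈ A
  symm := ⟨fun _ _ ⟨h, hx, hy⟩ => ⟨h.symm, hy, hx⟩⟩
  loopless := ⟨fun x ⟨h, _, _⟩ => G.loopless.irrefl x h⟩

/-- The set of neighbors of a set of vertices. -/
def nbhd {V : Type*} (G : SimpleGraph V) (A : Set V) : Set V :=
  {y | ∃ x ∈ A, G.Adj x y}

/-- The closed neighborhood `N[A] = A ∪ N(A)` of a set of vertices. -/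
def closedNbhd {V : Type*} (G : SimpleGraph V) (A : Set V) : Set V :=
  A ∪ nbhd G A

/-- A leaf of a graph is a vertex with a unique neighbor. -/
def IsLeaf {V : Type*} (G : SimpleGraph V) (x : V) : Prop :=
  ∃! y, G.Adj x y

/-- The level of a vertex `y`: its distance to the set of distinguished vertices
(the cycle vertices, resp. the root in the tree case). -/
def levelTo {V : Type*} (G : SimpleGraph V) {m : ℕ} (v : Fin m → V) (y : V) : ℕ :=
  sInf {d | ∃ i, G.dist (v i) y = d}

/-- `v` lists the vertices of a cycle of `G` (in cyclic order). -/
def IsCycleOn {V : Type*} (G : SimpleGraph V) {m : ℕ} [NeZero m] (v : Fin m → V) : Prop :=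
  Function.Injective v ∧ ∀ i : Fin m, G.Adj (v i) (v (i + 1))

/-- Every cycle of `G` has its vertices among `v 0, …, v (m-1)`; together with `IsCycleOn`
this says that the cycle on `v` is the unique cycle of `G`. -/
def UniqueCycle {V : Type*} (G : SimpleGraph V) {m : ℕ} (v : Fin m → V) : Prop :=
  ∀ (x : V) (c : G.Walk x x), c.IsCycle → ∀ y ∈ c.support, y ∈ Set.range v

/-- `G` has at most one cycle: either `G` is a tree (and `m = 1`, `v 0` being a chosen root),
or `G` has the unique cycle `v 0, …, v (m-1)` of length `m ≥ 3`. -/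
def AtMostOneCycle {V : Type*} (G : SimpleGraph V) {m : ℕ} [NeZero m] (v : Fin m → V) : Prop :=
  (m = 1 ∧ G.IsAcyclic) ∨ (3 ≤ m ∧ IsCycleOn G v ∧ UniqueCycle G v)

/-- The graph `Γ_G(C)`: the induced subgraph of `G` obtained by deleting the boundary
`∂(C) = N(C) \ C` of the cycle with vertex set `Cset`. -/
def Gamma {V : Type*} (G : SimpleGraph V) (Cset : Set V) : SimpleGraph V :=
  inducedOn G (nbhd G Cset \ Cset)ᶜ

/-- A graph (containing the cycle with vertex set `Cset`) is `3`-proximal if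
`ν_3(G) = ν_3(Γ_G(C))`. -/
def IsProximal3 {V : Type*} (G : SimpleGraph V) (Cset : Set V) : Prop :=
  pathNu G 3 = pathNu (Gamma G Cset) 3

theorem inducedOn_le {V : Type*} (G : SimpleGraph V) (A : Set V) : inducedOn G A ≤ G :=
  fun _ _ h => h.1

theorem isPathList_three_iff {V : Type*} (G : SimpleGraph V) (a b c : V) :
    IsPathList G 3 [a, b, c] ↔ G.Adj a b ∧ G.Adj b c ∧ a ≠ c := by
  constructor
  · rintro ⟨-, hnd, hch⟩
    obtain ⟨hab, hbc⟩ := List.isChain_cons_cons.1 hch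
    exact ⟨hab, List.isChain_pair.1 hbc, fun h => by simp [h] at hnd⟩
  · rintro ⟨hab, hbc, hac⟩
    exact ⟨rfl, by simp [hab.ne, hbc.ne, hac],
      List.isChain_cons_cons.2 ⟨hab, List.isChain_pair.2 hbc⟩⟩

theorem pathIdeal_mono (k : Type*) [Field k] {V : Type*} {G H : SimpleGraph V} (hGH : G ≤ H)
    (t : ℕ) : pathIdeal k G t ≤ pathIdeal k H t := by
  refine Ideal.span_mono ?_
  rintro _ ⟨l, ⟨hlen, hnd, hch⟩, rfl⟩
  exact ⟨l, ⟨hlen, hnd, hch.imp fun _ _ h => hGH h⟩, rfl⟩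

theorem mul_X_mem_pathIdeal_three (k : Type*) [Field k] {V : Type*} {G : SimpleGraph V}
    {a b c : V} (hab : G.Adj a b) (hbc : G.Adj b c) (hac : a ≠ c) :
    X a * X b * X c ∈ pathIdeal k G 3 :=
  Ideal.subset_span ⟨[a, b, c], (isPathList_three_iff G a b c).2 ⟨hab, hbc, hac⟩,
    by simp [mul_assoc]⟩

theorem pathIdeal_three_le_iff (k : Type*) [Field k] {V : Type*} (G : SimpleGraph V)
    (I : Ideal (MvPolynomial V k)) :
    pathIdeal k G 3 ≤ I ↔
      ∀ a b c, G.Adj a b → G.Adj b c → a ≠ c → X a * X b * X c ∈ I := by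
  refine ⟨fun h a b c hab hbc hac => h (mul_X_mem_pathIdeal_three k hab hbc hac), fun h => ?_⟩
  rw [pathIdeal, Ideal.span_le]
  rintro _ ⟨l, hl, rfl⟩
  obtain ⟨a, b, c, rfl⟩ : ∃ a b c, l = [a, b, c] := by
    match l, hl.1 with
    | [a, b, c], _ => exact ⟨a, b, c, rfl⟩
  obtain ⟨hab, hbc, hac⟩ := (isPathList_three_iff G a b c).1 hl
  simpa [mul_assoc] using h a b c hab hbc hac

/-- **Lemma (splitting off a leaf).**
Let `G` be a finite simple graph with a leaf `z_0`, and let `y_0` be the unique neighbor of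
`z_0`.  Then `I_3(G) = z_0·y_0·(x : x ∈ N(y_0) \ {z_0}) + I_3(G_1)`, where
`G_1 = G \ {z_0}`. -/
theorem pathIdeal_three_eq_leaf_split
    (k : Type*) [Field k] {V : Type*}
    (G : SimpleGraph V) (z0 y0 : V) (hz : G.neighborSet z0 = {y0}) :
    pathIdeal k G 3 =
      Ideal.span ((fun x => (X z0 * X y0 * X x : MvPolynomial V k)) ''
          (G.neighborSet y0 \ {z0})) +
        pathIdeal k (inducedOn G ({z0}ᶜ : Set V)) 3 := by
  have hadj : ∀ w, G.Adj z0 w ↔ w = y0 := fun w => by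
    rw [← SimpleGraph.mem_neighborSet, hz, Set.mem_singleton_iff]
  set L := Ideal.span ((fun x => (X z0 * X y0 * X x : MvPolynomial V k)) ''
    (G.neighborSet y0 \ {z0}))
  have mem_L : ∀ c, G.Adj y0 c → c ≠ z0 → X z0 * X y0 * X c ∈ L :=
    fun c hc hcz => Ideal.subset_span ⟨c, ⟨hc, hcz⟩, rfl⟩
  refine le_antisymm ((pathIdeal_three_le_iff k G _).2 fun a b c hab hbc hac => ?_) ?_
  · by_cases ha : a = z0
    · subst ha
      obtain rfl := (hadj b).1 hab
      exact Submodule.mem_sup_left (mem_L c hbc (Ne.symm hac))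
    by_cases hc : c = z0
    · subst hc
      obtain rfl := (hadj b).1 hbc.symm
      rw [show X a * X b * X c = X c * X b * X a by ring]
      exact Submodule.mem_sup_left (mem_L a hab.symm ha)
    have hb : b ≠ z0 := by
      rintro rfl
      exact hac (((hadj a).1 hab.symm).trans ((hadj c).1 hbc).symm)
    exact Submodule.mem_sup_right
      (mul_X_mem_pathIdeal_three k ⟨hab, ha, hb⟩ ⟨hbc, hb, hc⟩ hac)
  · refine sup_le (Ideal.span_le.2 ?_) (pathIdeal_mono k (inducedOn_le G _) 3)
    rintro _ ⟨x, ⟨hx, hxz⟩, rfl⟩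
    exact mul_X_mem_pathIdeal_three k ((hadj y0).2 rfl) hx (Ne.symm hxz)

end PathIdeals
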